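/- arXiv:2501.16198 — 8 statements merged into one kernel-verified Lean document; each statement's English description precedes it below -/
import Mathlib

section
/- Let K ⊆ L be a field extension and let f, g ∈ K[x₁,…,xₙ] be nonzero polynomials. Then f and g are relatively prime in K[x₁,…,xₙ] (every common divisor is a unit) if and only if their images in L[x₁,…,xₙ] under the coefficientwise inclusion are relatively prime in L[x₁,…,xₙ]. -/
open MvPolynomial

section TotalDegreeMul

variable {σ : Type*} {R : Type*} [CommRing R] [IsDomain R]

private lemma exists_degree_eq_totalDegree {p : MvPolynomial σ R} (hp : p ≠ 0) :
    ∃ m ∈ p.support, Finsupp.degree m = p.totalDegree := by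
  obtain ⟨m, hm, hdeg⟩ := p.support.exists_mem_eq_sup (support_nonempty.mpr hp)
    (fun s => s.sum fun _ e => e)
  exact ⟨m, hm, by simpa [Finsupp.degree_apply, Finsupp.sum, totalDegree] using hdeg.symm⟩

private lemma degree_add' (u v : σ →₀ ℕ) :
    Finsupp.degree (u + v) = Finsupp.degree u + Finsupp.degree v := by
  simp [Finsupp.degree_eq_weight_one, map_add]

private lemma coeff_zero_of_degree_gt {p : MvPolynomial σ R} {d : σ →₀ ℕ}
    (h : p.totalDegree < Finsupp.degree d) : coeff d p = 0 := by
  apply coeff_eq_zero_of_totalDegree_lt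
  simpa [Finsupp.degree_apply] using h

private lemma mv_totalDegree_mul {p q : MvPolynomial σ R} (hp : p ≠ 0) (hq : q ≠ 0) :
    (p * q).totalDegree = p.totalDegree + q.totalDegree := by
  classical
  refine le_antisymm (totalDegree_mul p q) ?_
  set a := p.totalDegree with ha
  set b := q.totalDegree with hb
  set P := homogeneousComponent a p with hP
  set Q := homogeneousComponent b q with hQ
  have hPp : ∀ d : σ →₀ ℕ, Finsupp.degree d = a → coeff d P = coeff d p := fun d hd => by
    rw [hP, coeff_homogeneousComponent, if_pos hd]
  have hQq : ∀ d : σ →₀ ℕ, Finsupp.degree d = b → coeff d Q = coeff d q := fun d hd => by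
    rw [hQ, coeff_homogeneousComponent, if_pos hd]
  have hPne : P ≠ 0 := by
    obtain ⟨m, hm, hdeg⟩ := exists_degree_eq_totalDegree hp
    intro h0
    have := hPp m hdeg
    rw [h0, coeff_zero] at this
    exact (mem_support_iff.mp hm) this.symm
  have hQne : Q ≠ 0 := by
    obtain ⟨m, hm, hdeg⟩ := exists_degree_eq_totalDegree hq
    intro h0
    have := hQq m hdeg
    rw [h0, coeff_zero] at this
    exact (mem_support_iff.mp hm) this.symm
  have hPQhom : (P * Q).IsHomogeneous (a + b) :=
    (homogeneousComponent_isHomogeneous a p).mul (homogeneousComponent_isHomogeneous b q)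
  have hPQne : P * Q ≠ 0 := mul_ne_zero hPne hQne
  -- find a monomial of degree a+b in P*Q
  obtain ⟨m, hm, hmd⟩ := exists_degree_eq_totalDegree hPQne
  have hmdeg : Finsupp.degree m = a + b := by
    rw [hmd, hPQhom.totalDegree hPQne]
  -- coeff m (p*q) = coeff m (P*Q) ≠ 0
  have key : coeff m (p * q) = coeff m (P * Q) := by
    rw [coeff_mul, coeff_mul]
    refine Finset.sum_congr rfl ?_
    rintro ⟨u, v⟩ huv
    rw [Finset.HasAntidiagonal.mem_antidiagonal] at huv
    have hsum : Finsupp.degree u + Finsupp.degree v = a + b := by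
      rw [← degree_add', huv, hmdeg]
    by_cases hu : Finsupp.degree u = a
    · have hv : Finsupp.degree v = b := by omega
      simp only [hPp u hu, hQq v hv]
    · rcases lt_or_gt_of_ne hu with hlt | hgt
      · -- degree v > b, so coeff v q = 0 and coeff v Q = 0
        have hvgt : b < Finsupp.degree v := by omega
        have h1 : coeff v q = 0 := coeff_zero_of_degree_gt hvgt
        have h2 : coeff v Q = 0 := by
          rw [hQ, coeff_homogeneousComponent, if_neg (by omega), ]
        simp [h1, h2]
      · have h1 : coeff u p = 0 := coeff_zero_of_degree_gt hgt
        have h2 : coeff u P = 0 := by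
          rw [hP, coeff_homogeneousComponent, if_neg (by omega)]
        simp [h1, h2]
  have hne : coeff m (p * q) ≠ 0 := by
    rw [key]; exact mem_support_iff.mp hm
  calc a + b = Finsupp.degree m := hmdeg.symm
    _ ≤ (p * q).totalDegree := by
        simpa [Finsupp.degree_apply, Finsupp.sum] using le_totalDegree (mem_support_iff.mpr hne)

end TotalDegreeMul

section IsUnit

variable {σ : Type*} {F : Type*} [Field F]

private lemma mv_isUnit_iff {p : MvPolynomial σ F} :
    IsUnit p ↔ p ≠ 0 ∧ p.totalDegree = 0 := by
  constructor
  · intro h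
    obtain ⟨u, rfl⟩ := h
    have h1 : (u : MvPolynomial σ F) * ↑u⁻¹ = 1 := u.mul_inv
    have hu : (u : MvPolynomial σ F) ≠ 0 := by
      intro h0; rw [h0, zero_mul] at h1; exact zero_ne_one h1
    have hv : (↑u⁻¹ : MvPolynomial σ F) ≠ 0 := by
      intro h0; rw [h0, mul_zero] at h1; exact zero_ne_one h1
    have := mv_totalDegree_mul hu hv
    rw [h1, totalDegree_one] at this
    exact ⟨hu, by omega⟩
  · rintro ⟨hne, hdeg⟩
    have : p = C (coeff 0 p) := by
      classical
      ext d
      rcases eq_or_ne d 0 with rfl | hd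
      · simp
      · rw [coeff_C, if_neg (Ne.symm hd)]
        by_contra hc
        have hmem : d ∈ p.support := mem_support_iff.mpr hc
        have := (totalDegree_eq_zero_iff σ p).mp hdeg d hmem
        exact hd (Finsupp.ext this)
    rw [this]
    have : coeff 0 p ≠ 0 := by
      intro h0; rw [h0, map_zero] at this; exact hne this
    exact IsUnit.map MvPolynomial.C (isUnit_iff_ne_zero.mpr this)

private lemma mv_totalDegree_le_of_dvd {p q : MvPolynomial σ F} (h : p ∣ q) (hq : q ≠ 0) :
    p.totalDegree ≤ q.totalDegree := by
  obtain ⟨w, rfl⟩ := h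
  have hp : p ≠ 0 := fun h0 => hq (by rw [h0, zero_mul])
  have hw : w ≠ 0 := fun h0 => hq (by rw [h0, mul_zero])
  rw [mv_totalDegree_mul hp hw]
  omega

end IsUnit

section Lam

variable {K L : Type*} [Field K] [Field L] [Algebra K L] {σ : Type*}

/-- Apply a `K`-linear functional `L →ₗ[K] K` coefficientwise. -/
private noncomputable def lam (l : L →ₗ[K] K) (P : MvPolynomial σ L) : MvPolynomial σ K :=
  ∑ m ∈ P.support, monomial m (l (coeff m P))

private lemma coeff_lam (l : L →ₗ[K] K) (P : MvPolynomial σ L) (d : σ →₀ ℕ) :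
    coeff d (lam l P) = l (coeff d P) := by
  classical
  rw [lam]
  rw [coeff_sum]
  simp only [coeff_monomial]
  rw [Finset.sum_ite_eq' P.support d (fun m => l (coeff m P))]
  split_ifs with h
  · rfl
  · rw [notMem_support_iff.mp h, map_zero]

private lemma lam_mul_map (l : L →ₗ[K] K) (P : MvPolynomial σ L) (q : MvPolynomial σ K) :
    lam l (P * MvPolynomial.map (algebraMap K L) q) = lam l P * q := by
  classical
  ext d
  rw [coeff_lam, coeff_mul, coeff_mul, map_sum]
  refine Finset.sum_congr rfl ?_
  rintro ⟨u, v⟩ _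
  rw [coeff_map, coeff_lam]
  have : coeff u P * algebraMap K L (coeff v q) = coeff v q • coeff u P := by
    rw [Algebra.smul_def, mul_comm]
  rw [this, map_smul, smul_eq_mul, mul_comm]

private lemma totalDegree_le_of_support_subset' {R S : Type*} [CommSemiring R] [CommSemiring S]
    {p : MvPolynomial σ R} {q : MvPolynomial σ S} (h : p.support ⊆ q.support) :
    p.totalDegree ≤ q.totalDegree :=
  Finset.sup_mono h

private lemma totalDegree_lam_le (l : L →ₗ[K] K) (P : MvPolynomial σ L) :
    (lam l P).totalDegree ≤ P.totalDegree := by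
  apply totalDegree_le_of_support_subset'
  intro d hd
  rw [mem_support_iff, coeff_lam] at hd
  rw [mem_support_iff]
  intro h0
  rw [h0, map_zero] at hd
  exact hd rfl

end Lam

section MapFacts

variable {K L : Type*} [Field K] [Field L] [Algebra K L] {σ : Type*}

private lemma totalDegree_map_eq (p : MvPolynomial σ K) :
    (MvPolynomial.map (algebraMap K L) p).totalDegree = p.totalDegree := by
  have hsupp : (MvPolynomial.map (algebraMap K L) p).support = p.support := by
    ext d
    simp only [mem_support_iff, coeff_map, ne_eq]
    rw [map_eq_zero_iff _ (algebraMap K L).injective]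
  exact le_antisymm (totalDegree_le_of_support_subset' hsupp.le)
    (totalDegree_le_of_support_subset' hsupp.ge)

end MapFacts

/-- Let `K ⊆ L` be a field extension and `f, g` nonzero polynomials in
`K[x₁,…,xₙ]`. Then `f` and `g` are relatively prime in `K[x₁,…,xₙ]` iff their images in
`L[x₁,…,xₙ]` are relatively prime. -/
theorem isRelPrime_iff_isRelPrime_map {K L : Type*} [Field K] [Field L] [Algebra K L]
    {n : ℕ} (f g : MvPolynomial (Fin n) K) (hf : f ≠ 0) (hg : g ≠ 0) :
    IsRelPrime f g ↔
      IsRelPrime (MvPolynomial.map (algebraMap K L) f)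
        (MvPolynomial.map (algebraMap K L) g) := by
  have hinj : Function.Injective (algebraMap K L) := (algebraMap K L).injective
  have hmapinj : Function.Injective (MvPolynomial.map (algebraMap K L) :
      MvPolynomial (Fin n) K → MvPolynomial (Fin n) L) := MvPolynomial.map_injective _ hinj
  have hFne : MvPolynomial.map (algebraMap K L) f ≠ 0 := fun h0 =>
    hf (hmapinj (by rw [h0, map_zero]))
  have hGne : MvPolynomial.map (algebraMap K L) g ≠ 0 := fun h0 =>
    hg (hmapinj (by rw [h0, map_zero]))
  constructor
  · -- hard direction
    intro h
    rintro d hdF hdG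
    by_contra hd
    have hdne : d ≠ 0 := fun h0 => hFne (by
      obtain ⟨w, hw⟩ := hdF
      rw [hw, h0, zero_mul])
    have hddeg : 1 ≤ d.totalDegree := by
      by_contra hc
      push_neg at hc
      exact hd (mv_isUnit_iff.mpr ⟨hdne, by omega⟩)
    obtain ⟨F', hF'⟩ := hdF
    obtain ⟨G', hG'⟩ := hdG
    have hF'ne : F' ≠ 0 := fun h0 => hFne (by rw [hF', h0, mul_zero])
    have hG'ne : G' ≠ 0 := fun h0 => hGne (by rw [hG', h0, mul_zero])
    have hdegF' : F'.totalDegree < f.totalDegree := by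
      have h1 : (MvPolynomial.map (algebraMap K L) f).totalDegree
          = d.totalDegree + F'.totalDegree := by rw [hF', mv_totalDegree_mul hdne hF'ne]
      have h2 := totalDegree_map_eq (L := L) f
      omega
    -- the key polynomial identity over L
    have hkey : F' * MvPolynomial.map (algebraMap K L) g
        = G' * MvPolynomial.map (algebraMap K L) f := by
      rw [hF', hG']; ring
    -- pick a functional detecting a nonzero coefficient of F'
    obtain ⟨m, hm⟩ := support_nonempty.mpr hF'ne
    have hc0 : coeff m F' ≠ 0 := mem_support_iff.mp hm
    let B := Module.Basis.ofVectorSpace K L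
    obtain ⟨i, hi⟩ : ∃ i, B.repr (coeff m F') i ≠ 0 := by
      by_contra hc
      push_neg at hc
      exact hc0 (B.repr.map_eq_zero_iff.mp (Finsupp.ext hc))
    set l : L →ₗ[K] K := B.coord i with hl
    have hu : coeff m (lam l F') ≠ 0 := by
      rw [coeff_lam]
      simpa [hl, Module.Basis.coord_apply] using hi
    have hune : lam l F' ≠ 0 := fun h0 => hu (by rw [h0, coeff_zero])
    have heq : lam l F' * g = lam l G' * f := by
      rw [← lam_mul_map l F' g, ← lam_mul_map l G' f, hkey]
    have hfdvd : f ∣ lam l F' :=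
      h.dvd_of_dvd_mul_right ⟨lam l G', by rw [heq, mul_comm]⟩
    have h1 : f.totalDegree ≤ (lam l F').totalDegree :=
      mv_totalDegree_le_of_dvd hfdvd hune
    have h2 : (lam l F').totalDegree ≤ F'.totalDegree := totalDegree_lam_le l F'
    omega
  · intro h
    rintro d hdf hdg
    have h1 : IsUnit (MvPolynomial.map (algebraMap K L) d) :=
      h (map_dvd _ hdf) (map_dvd _ hdg)
    obtain ⟨hne, hdeg⟩ := mv_isUnit_iff.mp h1
    have hdne : d ≠ 0 := fun h0 => hne (by rw [h0, map_zero])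
    rw [totalDegree_map_eq] at hdeg
    exact mv_isUnit_iff.mpr ⟨hdne, hdeg⟩
end

section
/- Let K be a field, S = K[x₁,…,xₙ], and let f ∈ S[x] be a polynomial of degree one in the variable x, i.e., f = g·x + h with g, h ∈ S and g ≠ 0. Let K ⊆ L be a field extension. If f is irreducible in S[x], then the image of f in L[x₁,…,xₙ][x] (under the coefficientwise inclusion K → L) is irreducible. -/
open Polynomial

section Aux

variable {K L : Type*} [Field K] [Field L] [Algebra K L] {n : ℕ}

/-- Apply a `K`-linear functional `L → K` to every coefficient of a multivariate
polynomial over `L`. -/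
noncomputable def projCoeff (l : L →ₗ[K] K) (e : MvPolynomial (Fin n) L) :
    MvPolynomial (Fin n) K :=
  ∑ μ ∈ e.support, MvPolynomial.monomial μ (l (MvPolynomial.coeff μ e))

lemma coeff_projCoeff (l : L →ₗ[K] K) (e : MvPolynomial (Fin n) L) (μ : Fin n →₀ ℕ) :
    MvPolynomial.coeff μ (projCoeff l e) = l (MvPolynomial.coeff μ e) := by
  classical
  simp only [projCoeff, MvPolynomial.coeff_sum, MvPolynomial.coeff_monomial]
  rw [Finset.sum_ite_eq' e.support μ]
  split_ifs with hμ
  · rfl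
  · rw [MvPolynomial.notMem_support_iff.mp hμ, map_zero]

lemma projCoeff_map_mul (l : L →ₗ[K] K) (a : MvPolynomial (Fin n) K)
    (e : MvPolynomial (Fin n) L) :
    projCoeff l (MvPolynomial.map (algebraMap K L) a * e) = a * projCoeff l e := by
  apply MvPolynomial.ext
  intro μ
  rw [coeff_projCoeff, MvPolynomial.coeff_mul, MvPolynomial.coeff_mul, map_sum]
  apply Finset.sum_congr rfl
  intro x _
  rw [MvPolynomial.coeff_map, coeff_projCoeff, ← Algebra.smul_def, map_smul, smul_eq_mul]

/-- Reconstruction of a polynomial over `L` from its `K`-basis components. -/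
lemma exists_recon (b : Module.Basis (Module.Free.ChooseBasisIndex K L) K L)
    (e : MvPolynomial (Fin n) L) :
    ∃ F : Finset (Module.Free.ChooseBasisIndex K L),
      e = ∑ i ∈ F, MvPolynomial.C (b i) *
        MvPolynomial.map (algebraMap K L) (projCoeff (b.coord i) e) := by
  classical
  refine ⟨e.support.biUnion (fun μ => (b.repr (MvPolynomial.coeff μ e)).support), ?_⟩
  apply MvPolynomial.ext
  intro μ
  rw [MvPolynomial.coeff_sum]
  have hsub : (b.repr (MvPolynomial.coeff μ e)).support ⊆
      e.support.biUnion (fun μ => (b.repr (MvPolynomial.coeff μ e)).support) := by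
    by_cases hμ : μ ∈ e.support
    · intro i hi; exact Finset.mem_biUnion.mpr ⟨μ, hμ, hi⟩
    · rw [MvPolynomial.notMem_support_iff.mp hμ, map_zero, Finsupp.support_zero]
      exact Finset.empty_subset _
  calc MvPolynomial.coeff μ e
      = ∑ i ∈ (b.repr (MvPolynomial.coeff μ e)).support,
          b.repr (MvPolynomial.coeff μ e) i • b i := by
        have := (b.linearCombination_repr (MvPolynomial.coeff μ e)).symm
        rwa [Finsupp.linearCombination_apply, Finsupp.sum] at this
    _ = ∑ i ∈ e.support.biUnion (fun μ => (b.repr (MvPolynomial.coeff μ e)).support),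
          b.repr (MvPolynomial.coeff μ e) i • b i := by
        apply Finset.sum_subset hsub
        intro i _ hi
        rw [Finsupp.notMem_support_iff.mp hi, zero_smul]
    _ = _ := by
        apply Finset.sum_congr rfl
        intro i _
        rw [MvPolynomial.coeff_C_mul, MvPolynomial.coeff_map, coeff_projCoeff,
          Module.Basis.coord_apply, Algebra.smul_def, mul_comm]

/-- Coprimality descends from `K[xs]` to `L[xs]`. -/
lemma isUnit_of_dvd_map (g h : MvPolynomial (Fin n) K) (hg : g ≠ 0)
    (hrel : IsRelPrime g h) (d : MvPolynomial (Fin n) L)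
    (h1 : d ∣ MvPolynomial.map (algebraMap K L) g)
    (h2 : d ∣ MvPolynomial.map (algebraMap K L) h) : IsUnit d := by
  classical
  obtain ⟨e₁, he₁⟩ := h1
  obtain ⟨e₂, he₂⟩ := h2
  set φ := MvPolynomial.map (algebraMap K L) with hφ
  have key : φ g * e₂ = φ h * e₁ := by
    calc φ g * e₂ = d * e₂ * e₁ := by rw [he₁]; ring
    _ = φ h * e₁ := by rw [← he₂]
  let b := Module.Free.chooseBasis K L
  -- componentwise relation
  have hcomp : ∀ i, ∃ c : MvPolynomial (Fin n) K,
      projCoeff (b.coord i) e₁ = g * c := by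
    intro i
    have : g * projCoeff (b.coord i) e₂ = h * projCoeff (b.coord i) e₁ := by
      rw [← projCoeff_map_mul, ← projCoeff_map_mul, key]
    have hdvd : g ∣ h * projCoeff (b.coord i) e₁ := ⟨_, this.symm⟩
    exact hrel.dvd_of_dvd_mul_left hdvd
  choose c hc using hcomp
  obtain ⟨F, hF⟩ := exists_recon b e₁
  have he₁' : e₁ = φ g * ∑ i ∈ F, MvPolynomial.C (b i) * φ (c i) := by
    rw [hF, Finset.mul_sum]
    apply Finset.sum_congr rfl
    intro i _
    rw [hc i, map_mul]
    ring
  have hφg : φ g ≠ 0 := by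
    intro h0
    exact hg (MvPolynomial.map_injective _ (algebraMap K L).injective
      (by rw [h0, map_zero]))
  have : φ g * (d * ∑ i ∈ F, MvPolynomial.C (b i) * φ (c i)) = φ g * 1 := by
    rw [mul_one]
    calc φ g * (d * ∑ i ∈ F, MvPolynomial.C (b i) * φ (c i))
        = d * (φ g * ∑ i ∈ F, MvPolynomial.C (b i) * φ (c i)) := by ring
      _ = d * e₁ := by rw [← he₁']
      _ = φ g := he₁.symm
  have := mul_left_cancel₀ hφg this
  exact IsUnit.of_mul_eq_one _ this

lemma isRelPrime_of_irreducible (g h : MvPolynomial (Fin n) K) (hg : g ≠ 0)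
    (hirr : Irreducible (Polynomial.C g * Polynomial.X + Polynomial.C h)) :
    IsRelPrime g h := by
  intro d hdg hdh
  obtain ⟨g₁, rfl⟩ := hdg
  obtain ⟨h₁, rfl⟩ := hdh
  have heq : Polynomial.C (d * g₁) * Polynomial.X + Polynomial.C (d * h₁) =
      Polynomial.C d * (Polynomial.C g₁ * Polynomial.X + Polynomial.C h₁) := by
    simp only [map_mul]; ring
  rcases hirr.isUnit_or_isUnit heq with hu | hu
  · exact Polynomial.isUnit_C.mp hu
  · exfalso
    have hg₁ : g₁ ≠ 0 := by rintro rfl; exact hg (mul_zero d)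
    have := Polynomial.natDegree_eq_zero_of_isUnit hu
    rw [Polynomial.natDegree_linear hg₁] at this
    exact one_ne_zero this

end Aux

/-- Let `K` be a field, `S = K[x₁,…,xₙ]`, and `f = g·x + h ∈ S[x]` with
`g ≠ 0`. If `f` is irreducible in `S[x]`, then its image in `L[x₁,…,xₙ][x]` under the
coefficientwise inclusion is irreducible, for every field extension `K ⊆ L`. -/
theorem irreducible_map_of_degree_one {K L : Type*} [Field K] [Field L] [Algebra K L]
    {n : ℕ} (g h : MvPolynomial (Fin n) K) (hg : g ≠ 0)
    (hirr : Irreducible (Polynomial.C g * Polynomial.X + Polynomial.C h)) :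
    Irreducible (Polynomial.map (MvPolynomial.map (algebraMap K L))
      (Polynomial.C g * Polynomial.X + Polynomial.C h)) := by
  have hrel : IsRelPrime g h := isRelPrime_of_irreducible g h hg hirr
  set φ := MvPolynomial.map (algebraMap K L) with hφ
  have hφg : φ g ≠ 0 := by
    intro h0
    exact hg (MvPolynomial.map_injective _ (algebraMap K L).injective
      (by rw [h0, map_zero]))
  have hmap : Polynomial.map φ (Polynomial.C g * Polynomial.X + Polynomial.C h) =
      Polynomial.C (φ g) * Polynomial.X + Polynomial.C (φ h) := by
    simp
  rw [hmap]
  have hdeg : (Polynomial.C (φ g) * Polynomial.X + Polynomial.C (φ h)).natDegree = 1 :=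
    Polynomial.natDegree_linear hφg
  have hne : Polynomial.C (φ g) * Polynomial.X + Polynomial.C (φ h) ≠ 0 := by
    intro h0
    rw [h0, Polynomial.natDegree_zero] at hdeg
    exact one_ne_zero hdeg.symm
  constructor
  · intro hu
    have := Polynomial.natDegree_eq_zero_of_isUnit hu
    rw [hdeg] at this
    exact one_ne_zero this
  · intro p q hpq
    have hp0 : p ≠ 0 := by rintro rfl; rw [zero_mul] at hpq; exact hne hpq
    have hq0 : q ≠ 0 := by rintro rfl; rw [mul_zero] at hpq; exact hne hpq
    have hsum : p.natDegree + q.natDegree = 1 := by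
      rw [← Polynomial.natDegree_mul hp0 hq0, ← hpq, hdeg]
    rcases Nat.eq_zero_or_pos p.natDegree with hp | hp
    · left
      have hpc : p = Polynomial.C (p.coeff 0) := Polynomial.eq_C_of_natDegree_eq_zero hp
      have hd : IsUnit (p.coeff 0) := by
        apply isUnit_of_dvd_map g h hg hrel (p.coeff 0)
        · refine ⟨q.coeff 1, ?_⟩
          calc φ g = (Polynomial.C (φ g) * Polynomial.X + Polynomial.C (φ h)).coeff 1 := by
                simp
            _ = (Polynomial.C (p.coeff 0) * q).coeff 1 := by rw [hpq, ← hpc]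
            _ = p.coeff 0 * q.coeff 1 := Polynomial.coeff_C_mul _
        · refine ⟨q.coeff 0, ?_⟩
          calc φ h = (Polynomial.C (φ g) * Polynomial.X + Polynomial.C (φ h)).coeff 0 := by
                simp
            _ = (Polynomial.C (p.coeff 0) * q).coeff 0 := by rw [hpq, ← hpc]
            _ = p.coeff 0 * q.coeff 0 := Polynomial.coeff_C_mul _
      rw [hpc]
      exact Polynomial.isUnit_C.mpr hd
    · right
      have hq : q.natDegree = 0 := by omega
      have hqc : q = Polynomial.C (q.coeff 0) := Polynomial.eq_C_of_natDegree_eq_zero hq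
      have hd : IsUnit (q.coeff 0) := by
        apply isUnit_of_dvd_map g h hg hrel (q.coeff 0)
        · refine ⟨p.coeff 1, ?_⟩
          calc φ g = (Polynomial.C (φ g) * Polynomial.X + Polynomial.C (φ h)).coeff 1 := by
                simp
            _ = (p * Polynomial.C (q.coeff 0)).coeff 1 := by rw [hpq, ← hqc]
            _ = q.coeff 0 * p.coeff 1 := by
                rw [mul_comm p, Polynomial.coeff_C_mul]
        · refine ⟨p.coeff 0, ?_⟩
          calc φ h = (Polynomial.C (φ g) * Polynomial.X + Polynomial.C (φ h)).coeff 0 := by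
                simp
            _ = (p * Polynomial.C (q.coeff 0)).coeff 0 := by rw [hpq, ← hqc]
            _ = q.coeff 0 * p.coeff 0 := by
                rw [mul_comm p, Polynomial.coeff_C_mul]
      rw [hqc]
      exact Polynomial.isUnit_C.mpr hd
end

section
/- Let K be a field, S = K[x₁,…,xₙ], and let f ∈ S be a square-free supported polynomial. If f = f₁ ⋯ f_t is a factorization of f with every factor f_i irreducible in S, then each f_i is a square-free supported polynomial. -/
/-- A multivariate polynomial is *square-free supported* if every monomial in its support
is square-free, i.e. every variable occurs with exponent at most `1`. -/
def SquarefreeSupported {R : Type*} [CommSemiring R] {n : ℕ}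
    (f : MvPolynomial (Fin n) R) : Prop :=
  ∀ m ∈ f.support, ∀ i : Fin n, m i ≤ 1

/-!
Over a domain the degree in each variable is additive under multiplication, so a divisor
of a nonzero polynomial has degree at most `1` in every variable whenever the polynomial does.
-/

namespace MvPolynomial

variable {R σ : Type*} [CommSemiring R]

theorem degreeOf_le_of_dvd [NoZeroDivisors R] {p q : MvPolynomial σ R} (i : σ) (h : p ∣ q)
    (hq : q ≠ 0) : degreeOf i p ≤ degreeOf i q := by
  obtain ⟨r, rfl⟩ := h
  rw [degreeOf_mul_eq (left_ne_zero_of_mul hq) (right_ne_zero_of_mul hq)]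
  exact Nat.le_add_right _ _

end MvPolynomial

open MvPolynomial

theorem squarefreeSupported_iff_degreeOf_le_one {R : Type*} [CommSemiring R] {n : ℕ}
    (f : MvPolynomial (Fin n) R) : SquarefreeSupported f ↔ ∀ i, degreeOf i f ≤ 1 := by
  simp only [SquarefreeSupported, degreeOf_le_iff]
  exact ⟨fun h i m hm ↦ h m hm i, fun h m hm i ↦ h i m hm⟩

theorem SquarefreeSupported.of_dvd {R : Type*} [CommSemiring R] [NoZeroDivisors R] {n : ℕ}
    {f g : MvPolynomial (Fin n) R} (hf : SquarefreeSupported f) (hf₀ : f ≠ 0) (hgf : g ∣ f) :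
    SquarefreeSupported g := by
  rw [squarefreeSupported_iff_degreeOf_le_one] at hf ⊢
  exact fun i ↦ (degreeOf_le_of_dvd i hgf hf₀).trans (hf i)

/-- If `f` is square-free supported and `f = f₁ ⋯ f_t` with each `fᵢ`
irreducible, then each `fᵢ` is square-free supported. -/
theorem squarefreeSupported_of_irreducible_factor {K : Type*} [Field K] {n t : ℕ}
    (f : MvPolynomial (Fin n) K) (hf : SquarefreeSupported f)
    (fs : Fin t → MvPolynomial (Fin n) K) (hprod : f = ∏ i, fs i)
    (hirr : ∀ i, Irreducible (fs i)) :
    ∀ i, SquarefreeSupported (fs i) := by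
  have hf₀ : f ≠ 0 := hprod ▸ Finset.prod_ne_zero_iff.mpr fun i _ ↦ (hirr i).ne_zero
  exact fun i ↦ hf.of_dvd hf₀ (hprod ▸ Finset.dvd_prod_of_mem fs (Finset.mem_univ i))
end

section
/- Let K be a field, S = K[x₁,…,xₙ], and let f ∈ S be a square-free supported polynomial. If f = f₁ ⋯ f_t is a factorization of f with every factor f_i irreducible in S, then for all indices i ≠ j the sets of variables vars(f_i) and vars(f_j) are disjoint, i.e., no variable x_k divides both a monomial in the support of f_i and a monomial in the support of f_j. -/
/-! Over a domain, `degreeOf k` is additive on products of nonzero polynomials. A variable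
occurring in two distinct factors would therefore occur with exponent at least `2` in the
product, which is impossible when every monomial of the product is square-free. -/

open MvPolynomial

theorem SquarefreeSupported.degreeOf_le_one {R : Type*} [CommSemiring R] {n : ℕ}
    {f : MvPolynomial (Fin n) R} (hf : SquarefreeSupported f) (k : Fin n) :
    f.degreeOf k ≤ 1 :=
  degreeOf_le_iff.mpr fun m hm => hf m hm k

namespace MvPolynomial

theorem pairwiseDisjoint_vars_of_degreeOf_prod_le_one {R σ ι : Type*} [CommSemiring R]
    [NoZeroDivisors R] (s : Finset ι) (f : ι → MvPolynomial σ R) (hf : ∀ i ∈ s, f i ≠ 0)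
    (hdeg : ∀ k, degreeOf k (∏ i ∈ s, f i) ≤ 1) :
    (s : Set ι).PairwiseDisjoint fun i => (f i).vars := by
  classical
  intro i hi j hj hij
  refine Finset.disjoint_left.mpr fun k hki hkj => ?_
  have hi₁ : 1 ≤ (f i).degreeOf k :=
    Nat.one_le_iff_ne_zero.mpr (mem_vars_iff_degreeOf_ne_zero.mp hki)
  have hj₁ : 1 ≤ (f j).degreeOf k :=
    Nat.one_le_iff_ne_zero.mpr (mem_vars_iff_degreeOf_ne_zero.mp hkj)
  have hpair : {i, j} ⊆ s := Finset.insert_subset hi (Finset.singleton_subset_iff.mpr hj)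
  have htwo : 2 ≤ degreeOf k (∏ l ∈ s, f l) := calc
    2 ≤ (f i).degreeOf k + (f j).degreeOf k := by omega
    _ = ∑ l ∈ {i, j}, (f l).degreeOf k :=
      (Finset.sum_pair (f := fun l => (f l).degreeOf k) hij).symm
    _ ≤ ∑ l ∈ s, (f l).degreeOf k := Finset.sum_le_sum_of_subset hpair
    _ = degreeOf k (∏ l ∈ s, f l) := (degreeOf_prod_eq s f hf).symm
  exact absurd (hdeg k) (by omega)

end MvPolynomial

/-- If `f` is square-free supported and `f = f₁ ⋯ f_t` with each `fᵢ`
irreducible, then the irreducible factors have pairwise disjoint sets of variables. -/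
theorem vars_disjoint_of_irreducible_factors {K : Type*} [Field K] {n t : ℕ}
    (f : MvPolynomial (Fin n) K) (hf : SquarefreeSupported f)
    (fs : Fin t → MvPolynomial (Fin n) K) (hprod : f = ∏ i, fs i)
    (hirr : ∀ i, Irreducible (fs i)) :
    ∀ i j : Fin t, i ≠ j → Disjoint (fs i).vars (fs j).vars := by
  intro i j hij
  refine pairwiseDisjoint_vars_of_degreeOf_prod_le_one Finset.univ fs
    (fun l _ => (hirr l).ne_zero) (fun k => ?_) (by simp) (by simp) hij
  rw [← hprod]
  exact hf.degreeOf_le_one k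
end

section
/- Let K be a field, S = K[x₁,…,xₙ], and let f ∈ S be an irreducible square-free supported polynomial. Then f is geometrically irreducible: for every field extension K ⊆ L, the image of f in L[x₁,…,xₙ] under the coefficientwise inclusion is irreducible. Equivalently, L[x₁,…,xₙ]/(f) is an integral domain for every field extension L of K. -/
set_option maxHeartbeats 1000000 in
open MvPolynomial in
private lemma coeff_mul_disjoint {R σ : Type*} [CommSemiring R] [DecidableEq σ] (A : σ → Prop)
    (g h : MvPolynomial σ R)
    (hgs : ∀ u ∈ g.support, ∀ i, ¬ A i → u i = 0)
    (hhs : ∀ v ∈ h.support, ∀ i, A i → v i = 0)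
    (a b : σ →₀ ℕ) (ha : ∀ i, ¬ A i → a i = 0) (hb : ∀ i, A i → b i = 0) :
    coeff (a + b) (g * h) = coeff a g * coeff b h := by
  classical
  rw [coeff_mul]
  apply Finset.sum_eq_single (a, b)
  · rintro ⟨u, v⟩ hmem hne
    by_contra hc
    have hu : coeff u g ≠ 0 := left_ne_zero_of_mul hc
    have hv : coeff v h ≠ 0 := right_ne_zero_of_mul hc
    have huv : u + v = a + b := Finset.HasAntidiagonal.mem_antidiagonal.mp hmem
    apply hne
    have hpt : ∀ i, u i = a i ∧ v i = b i := by
      intro i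
      have h4 : u i + v i = a i + b i := by
        have := DFunLike.congr_fun huv i
        simpa using this
      by_cases hA : A i
      · have hv0 : v i = 0 := hhs v (mem_support_iff.mpr hv) i hA
        have hb0 : b i = 0 := hb i hA
        omega
      · have hu0 : u i = 0 := hgs u (mem_support_iff.mpr hu) i hA
        have ha0 : a i = 0 := ha i hA
        omega
    exact Prod.ext (Finsupp.ext fun i => (hpt i).1) (Finsupp.ext fun i => (hpt i).2)
  · intro habs
    simp [Finset.HasAntidiagonal.mem_antidiagonal] at habs

open MvPolynomial in
private lemma degreeOf_mul_eq' {L : Type*} [Field L] {n : ℕ} (i : Fin n)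
    (g h : MvPolynomial (Fin n) L) (hg : g ≠ 0) (hh : h ≠ 0) :
    degreeOf i (g * h) = degreeOf i g + degreeOf i h := by
  cases n with
  | zero => exact i.elim0
  | succ m =>
    have key : ∀ p : MvPolynomial (Fin (m + 1)) L,
        degreeOf i p = (finSuccEquiv L m (rename (Equiv.swap 0 i) p)).natDegree := by
      intro p
      rw [natDegree_finSuccEquiv]
      have := degreeOf_rename_of_injective (p := p)
        (Equiv.swap (0 : Fin (m + 1)) i).injective i
      rw [Equiv.swap_apply_right] at this
      rw [this]
    have hren : ∀ p : MvPolynomial (Fin (m + 1)) L, p ≠ 0 →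
        finSuccEquiv L m (rename (Equiv.swap (0 : Fin (m+1)) i) p) ≠ 0 := by
      intro p hp hz
      apply hp
      have h1 : rename (Equiv.swap (0 : Fin (m+1)) i) p = 0 :=
        (finSuccEquiv L m).injective (by simpa using hz)
      exact rename_injective _ (Equiv.swap (0 : Fin (m+1)) i).injective
        (by simpa using h1)
    rw [key, key, key, map_mul, map_mul,
      Polynomial.natDegree_mul (hren g hg) (hren h hh)]

/-- An irreducible square-free supported polynomial is geometrically
irreducible: its image in `L[x₁,…,xₙ]` is irreducible for every field extension `K ⊆ L`;
equivalently, `L[x₁,…,xₙ]/(f)` is an integral domain for every such `L`. -/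
theorem geometrically_irreducible_of_squarefreeSupported {K : Type*} [Field K] {n : ℕ}
    (f : MvPolynomial (Fin n) K) (hsq : SquarefreeSupported f) (hirr : Irreducible f) :
    ∀ (L : Type*) [Field L] [Algebra K L],
      Irreducible (MvPolynomial.map (algebraMap K L) f) ∧
      IsDomain (MvPolynomial (Fin n) L ⧸
        Ideal.span {MvPolynomial.map (algebraMap K L) f}) := by
  classical
  intro L _ _
  open MvPolynomial in
  set φ := algebraMap K L with hφdef
  have hφ : Function.Injective φ := (algebraMap K L).injective
  have hf0 : f ≠ 0 := hirr.ne_zero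
  have hmapinj : Function.Injective (MvPolynomial.map (σ := Fin n) φ) :=
    MvPolynomial.map_injective φ hφ
  have hmap0 : MvPolynomial.map φ f ≠ 0 := fun hz => hf0 (hmapinj (by simpa using hz))
  have hsq' : ∀ i, degreeOf i (MvPolynomial.map φ f) ≤ 1 := by
    intro i
    rw [degreeOf_le_iff]
    intro m hm
    exact hsq m (support_map_subset _ _ hm) i
  have hIrr : Irreducible (MvPolynomial.map φ f) := by
    constructor
    · -- not a unit
      intro hu
      apply hirr.not_isUnit
      obtain ⟨v, hv⟩ := isUnit_iff_exists_inv.mp hu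
      have hv0 : v ≠ 0 := by
        rintro rfl
        rw [mul_zero] at hv
        simp at hv
      have hdeg : ∀ i, degreeOf i (MvPolynomial.map φ f) = 0 := by
        intro i
        have hadd := degreeOf_mul_eq' i _ v hmap0 hv0
        rw [hv] at hadd
        have h1 : degreeOf i (1 : MvPolynomial (Fin n) L) = 0 := by
          simpa using degreeOf_C (1 : L) i
        omega
      have hsupp0 : ∀ m ∈ f.support, m = 0 := by
        intro m hm
        have hm' : m ∈ (MvPolynomial.map φ f).support := by
          rw [mem_support_iff, coeff_map]
          intro hz
          exact (mem_support_iff.mp hm) (hφ (by simpa using hz))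
        ext i
        have := degreeOf_le_iff.mp (le_of_eq (hdeg i)) m hm'
        simp only [Finsupp.coe_zero, Pi.zero_apply]
        omega
      have hfC : f = C (coeff 0 f) := by
        apply MvPolynomial.ext
        intro m
        rw [coeff_C]
        by_cases h0 : m = 0
        · subst h0; simp
        · rw [if_neg (fun h => h0 h.symm)]
          by_contra hz
          exact h0 (hsupp0 m (mem_support_iff.mpr hz))
      have hc0 : coeff 0 f ≠ 0 := by
        intro hz
        rw [hz, map_zero] at hfC
        exact hf0 hfC
      rw [hfC]
      exact (isUnit_iff_ne_zero.mpr hc0).map MvPolynomial.C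
    · -- factorizations are trivial
      intro p q hpq
      by_contra hcon
      push_neg at hcon
      obtain ⟨hpu, hqu⟩ := hcon
      have hp0 : p ≠ 0 := by rintro rfl; rw [zero_mul] at hpq; exact hmap0 hpq
      have hq0 : q ≠ 0 := by rintro rfl; rw [mul_zero] at hpq; exact hmap0 hpq
      set A : Fin n → Prop := fun i => degreeOf i p ≠ 0 with hAdef
      have hgs : ∀ u ∈ p.support, ∀ i, ¬ A i → u i = 0 := by
        intro u hu i hAi
        have h0 : degreeOf i p = 0 := not_not.mp hAi
        have := degreeOf_le_iff.mp (le_of_eq h0) u hu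
        simpa using this
      have hhs : ∀ v ∈ q.support, ∀ i, A i → v i = 0 := by
        intro v hv i hAi
        have hadd := degreeOf_mul_eq' i p q hp0 hq0
        rw [← hpq] at hadd
        have h1 := hsq' i
        have hdp : degreeOf i p ≠ 0 := hAi
        have hq : degreeOf i q = 0 := by omega
        have := degreeOf_le_iff.mp (le_of_eq hq) v hv
        simpa using this
      obtain ⟨a0, ha0⟩ := (support_nonempty.mpr hp0)
      obtain ⟨b0, hb0⟩ := (support_nonempty.mpr hq0)
      set α := coeff a0 p with hαdef
      set β := coeff b0 q with hβdef
      have hα : α ≠ 0 := mem_support_iff.mp ha0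
      have hβ : β ≠ 0 := mem_support_iff.mp hb0
      have keyg : ∀ a ∈ p.support, coeff (a + b0) (MvPolynomial.map φ f) = coeff a p * β := by
        intro a ha
        rw [hpq]
        exact coeff_mul_disjoint A p q hgs hhs a b0 (hgs a ha) (hhs b0 hb0)
      have keyh : ∀ b ∈ q.support, coeff (a0 + b) (MvPolynomial.map φ f) = α * coeff b q := by
        intro b hb
        rw [hpq]
        exact coeff_mul_disjoint A p q hgs hhs a0 b (hgs a0 ha0) (hhs b hb)
      set F1 : MvPolynomial (Fin n) K := ∑ a ∈ p.support, monomial a (coeff (a + b0) f) with hF1def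
      set F2 : MvPolynomial (Fin n) K := ∑ b ∈ q.support, monomial b (coeff (a0 + b) f) with hF2def
      have hF1 : MvPolynomial.map φ F1 = C β * p := by
        rw [hF1def, map_sum]
        have hterm : ∀ a ∈ p.support,
            MvPolynomial.map φ (monomial a (coeff (a + b0) f)) = C β * monomial a (coeff a p) := by
          intro a ha
          rw [map_monomial]
          have : φ (coeff (a + b0) f) = coeff a p * β := by
            rw [← coeff_map]; exact keyg a ha
          rw [this, mul_comm, C_mul_monomial]
        rw [Finset.sum_congr rfl hterm, ← Finset.mul_sum, support_sum_monomial_coeff]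
      have hF2 : MvPolynomial.map φ F2 = C α * q := by
        rw [hF2def, map_sum]
        have hterm : ∀ b ∈ q.support,
            MvPolynomial.map φ (monomial b (coeff (a0 + b) f)) = C α * monomial b (coeff b q) := by
          intro b hb
          rw [map_monomial]
          have : φ (coeff (a0 + b) f) = α * coeff b q := by
            rw [← coeff_map]; exact keyh b hb
          rw [this, C_mul_monomial]
        rw [Finset.sum_congr rfl hterm, ← Finset.mul_sum, support_sum_monomial_coeff]
      set c := coeff (a0 + b0) f with hcdef
      have hc : φ c = α * β := by
        rw [hcdef, ← coeff_map]
        exact keyg a0 ha0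
      have hc0 : c ≠ 0 := by
        intro h0
        rw [h0, map_zero] at hc
        exact (mul_ne_zero hα hβ) hc.symm
      have hmain : F1 * F2 = C c * f := by
        apply hmapinj
        rw [map_mul, hF1, hF2, map_mul, MvPolynomial.map_C, hc, hpq, C_mul]
        ring
      have hfact : f = (C c⁻¹ * F1) * F2 := by
        have : (C c⁻¹ * F1) * F2 = C c⁻¹ * (F1 * F2) := by ring
        rw [this, hmain, ← mul_assoc, ← C_mul, inv_mul_cancel₀ hc0, C_1, one_mul]
      rcases hirr.2 hfact with hu | hu
      · have h1 : IsUnit F1 := isUnit_of_mul_isUnit_right hu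
        have h2 : IsUnit (MvPolynomial.map φ F1) := h1.map (MvPolynomial.map φ)
        rw [hF1] at h2
        exact hpu (isUnit_of_mul_isUnit_right h2)
      · have h2 : IsUnit (MvPolynomial.map φ F2) := hu.map (MvPolynomial.map φ)
        rw [hF2] at h2
        exact hqu (isUnit_of_mul_isUnit_right h2)
  refine ⟨hIrr, ?_⟩
  have hprime : Prime (MvPolynomial.map φ f) :=
    (UniqueFactorizationMonoid.irreducible_iff_prime).mp hIrr
  have : (Ideal.span {MvPolynomial.map φ f}).IsPrime :=
    (Ideal.span_singleton_prime hmap0).mpr hprime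
  exact Ideal.Quotient.isDomain _
end

section
/- Let K be a field and g, h ∈ S = K[x₁,…,xₙ] be square-free supported homogeneous polynomials with deg(h) = 1 + deg(g). Let ℓ = a₁x₁ + ⋯ + aₙxₙ + 1 for some a₁,…,aₙ ∈ K. If g is irreducible and g does not divide h, then the polynomial f = g·ℓ + h is geometrically irreducible: for every field extension K ⊆ L, the image of f in L[x₁,…,xₙ] is irreducible. -/
open MvPolynomial Polynomial

namespace GeomIrred

variable {R : Type*} [CommSemiring R] {σ : Type*}

/-- The grading homomorphism `xᵢ ↦ xᵢ·t`. -/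
noncomputable def hgr : MvPolynomial σ R →+* Polynomial (MvPolynomial σ R) :=
  eval₂Hom (Polynomial.C.comp MvPolynomial.C)
    (fun i => Polynomial.C (MvPolynomial.X i) * Polynomial.X)

lemma hgr_monomial (m : σ →₀ ℕ) (c : R) :
    hgr (monomial m c) = Polynomial.C (monomial m c) * Polynomial.X ^ (m.degree) := by
  classical
  rw [hgr, eval₂Hom_monomial]
  have : (m.prod fun i k => (Polynomial.C (MvPolynomial.X i) * Polynomial.X) ^ k)
      = Polynomial.C (m.prod fun i k => (MvPolynomial.X i : MvPolynomial σ R) ^ k)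
        * Polynomial.X ^ m.degree := by
    rw [Finsupp.prod, Finsupp.prod, Finsupp.degree]
    simp_rw [mul_pow, ← Polynomial.C_pow]
    rw [Finset.prod_mul_distrib, ← map_prod, Finset.prod_pow_eq_pow_sum]
    rfl
  rw [this, RingHom.comp_apply, ← mul_assoc, ← map_mul, ← monomial_eq]

lemma coeff_hgr (p : MvPolynomial σ R) (d : ℕ) :
    (hgr p).coeff d = homogeneousComponent d p := by
  classical
  induction p using MvPolynomial.induction_on' with
  | monomial m c =>
      rw [hgr_monomial]
      ext m'
      simp only [Polynomial.coeff_C_mul, Polynomial.coeff_X_pow,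
        coeff_homogeneousComponent, mul_ite, mul_one, mul_zero, MvPolynomial.coeff_monomial]
      by_cases h1 : m = m' <;> by_cases h2 : m'.degree = d <;>
        split_ifs <;> simp_all [MvPolynomial.coeff_monomial]
  | add p q hp hq => simp [map_add, Polynomial.coeff_add, hp, hq]


lemma hgr_ne_zero {p : MvPolynomial σ R} (hp : p ≠ 0) : hgr p ≠ 0 := by
  intro h
  apply hp
  rw [← sum_homogeneousComponent p]
  refine Finset.sum_eq_zero fun i _ => ?_
  rw [← coeff_hgr, h, Polynomial.coeff_zero]

lemma hgr_of_isHomogeneous {p : MvPolynomial σ R} {k : ℕ} (hp : p.IsHomogeneous k) :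
    hgr p = Polynomial.C p * Polynomial.X ^ k := by
  ext d
  rw [coeff_hgr, Polynomial.coeff_C_mul, Polynomial.coeff_X_pow,
    homogeneousComponent_of_mem ((mem_homogeneousSubmodule _ _).2 hp)]
  by_cases h : d = k <;> simp [h]

lemma isHomogeneous_of_components {p : MvPolynomial σ R} {k : ℕ}
    (h0 : ∀ d ≠ k, homogeneousComponent d p = 0) : p.IsHomogeneous k := by
  have hsum := sum_homogeneousComponent p
  rw [Finset.sum_eq_single k (fun b _ hb => h0 b hb) (fun hk => by
    refine homogeneousComponent_eq_zero _ p ?_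
    simp only [Finset.mem_range, not_lt] at hk
    omega)] at hsum
  rw [← hsum]
  exact homogeneousComponent_isHomogeneous k p

lemma homogeneousComponent_mul_of_isHomogeneous {p : MvPolynomial σ R} {k : ℕ}
    (hp : p.IsHomogeneous k) (q : MvPolynomial σ R) (d : ℕ) (hkd : k ≤ d) :
    homogeneousComponent d (p * q) = p * homogeneousComponent (d - k) q := by
  have : p * q = q * p := mul_comm p q
  rw [← coeff_hgr, this, map_mul, hgr_of_isHomogeneous hp, ← mul_assoc,
    Polynomial.coeff_mul_X_pow', if_pos hkd, Polynomial.coeff_mul_C, coeff_hgr, mul_comm]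

lemma dvd_homogeneousComponent_of_isHomogeneous_dvd {w F : MvPolynomial σ R} {k : ℕ}
    (hw : w.IsHomogeneous k) (hdvd : w ∣ F) (d : ℕ) : w ∣ homogeneousComponent d F := by
  obtain ⟨t, rfl⟩ := hdvd
  by_cases h : k ≤ d
  · rw [homogeneousComponent_mul_of_isHomogeneous hw t d h]
    exact Dvd.intro _ rfl
  · have : homogeneousComponent d (w * t) = 0 := by
      have hc : w * t = t * w := mul_comm w t
      rw [← coeff_hgr, hc, map_mul, hgr_of_isHomogeneous hw, ← mul_assoc,
        Polynomial.coeff_mul_X_pow', if_neg h]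
    rw [this]
    exact dvd_zero w

lemma homogeneousComponent_add_top {A B : MvPolynomial σ R} {d : ℕ}
    (hA : A.IsHomogeneous (d + 1)) (hB : B.IsHomogeneous d) :
    homogeneousComponent (d + 1) (A + B) = A := by
  rw [map_add, homogeneousComponent_of_mem ((mem_homogeneousSubmodule _ _).2 hA),
    homogeneousComponent_of_mem ((mem_homogeneousSubmodule _ _).2 hB),
    if_pos rfl, if_neg (by omega), add_zero]

lemma homogeneousComponent_add_bot {A B : MvPolynomial σ R} {d : ℕ}
    (hA : A.IsHomogeneous (d + 1)) (hB : B.IsHomogeneous d) :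
    homogeneousComponent d (A + B) = B := by
  rw [map_add, homogeneousComponent_of_mem ((mem_homogeneousSubmodule _ _).2 hA),
    homogeneousComponent_of_mem ((mem_homogeneousSubmodule _ _).2 hB),
    if_pos rfl, if_neg (by omega), zero_add]

section Domain
variable {R : Type*} [CommRing R] [IsDomain R] {σ : Type*}

lemma exists_isHomogeneous_factor {p q A B : MvPolynomial σ R} {d : ℕ}
    (hA : A.IsHomogeneous (d + 1)) (hB : B.IsHomogeneous d) (hA0 : A ≠ 0) (hB0 : B ≠ 0)
    (hpq : p * q = A + B) :
    (∃ k, p.IsHomogeneous k) ∨ (∃ k, q.IsHomogeneous k) := by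
  have hF0 : A + B ≠ 0 := by
    intro h
    exact hA0 (by rw [← homogeneousComponent_add_top hA hB, h, map_zero])
  have hp0 : p ≠ 0 := by rintro rfl; rw [zero_mul] at hpq; exact hF0 hpq.symm
  have hq0 : q ≠ 0 := by rintro rfl; rw [mul_zero] at hpq; exact hF0 hpq.symm
  have hgrF : hgr (A + B) = Polynomial.C A * Polynomial.X ^ (d + 1)
      + Polynomial.C B * Polynomial.X ^ d := by
    rw [map_add, hgr_of_isHomogeneous hA, hgr_of_isHomogeneous hB]
  have hnd : (hgr (A + B)).natDegree = d + 1 := by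
    rw [hgrF, Polynomial.natDegree_add_eq_left_of_natDegree_lt, Polynomial.natDegree_C_mul_X_pow _ _ hA0]
    rw [Polynomial.natDegree_C_mul_X_pow _ _ hA0]
    exact lt_of_le_of_lt (Polynomial.natDegree_C_mul_X_pow_le _ _) (by omega)
  have hcoeffs : ∀ m : ℕ, (hgr (A + B)).coeff m = (if m = d + 1 then A else 0) + (if m = d then B else 0) := by
    intro m
    rw [hgrF, Polynomial.coeff_add, Polynomial.coeff_C_mul, Polynomial.coeff_C_mul,
      Polynomial.coeff_X_pow, Polynomial.coeff_X_pow]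
    split_ifs <;> simp
  have htd : (hgr (A + B)).natTrailingDegree = d := by
    refine le_antisymm (Polynomial.natTrailingDegree_le_of_ne_zero ?_)
      (Polynomial.le_natTrailingDegree (hgr_ne_zero hF0) fun m hm => ?_)
    · rw [hcoeffs d, if_neg (by omega), if_pos rfl, zero_add]; exact hB0
    · rw [hcoeffs m, if_neg (by omega), if_neg (by omega), zero_add]
  have hfac : hgr p * hgr q = hgr (A + B) := by rw [← map_mul, hpq]
  have hP0 := hgr_ne_zero hp0
  have hQ0 := hgr_ne_zero hq0
  have h1 : (hgr p).natDegree + (hgr q).natDegree = d + 1 := by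
    rw [← Polynomial.natDegree_mul hP0 hQ0, hfac, hnd]
  have h2 : (hgr p).natTrailingDegree + (hgr q).natTrailingDegree = d := by
    rw [← Polynomial.natTrailingDegree_mul hP0 hQ0, hfac, htd]
  have h3 := Polynomial.natTrailingDegree_le_natDegree (hgr p)
  have h4 := Polynomial.natTrailingDegree_le_natDegree (hgr q)
  have key : (hgr p).natDegree = (hgr p).natTrailingDegree ∨
      (hgr q).natDegree = (hgr q).natTrailingDegree := by omega
  have main : ∀ r : MvPolynomial σ R, r ≠ 0 → (hgr r).natDegree = (hgr r).natTrailingDegree →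
      ∃ k, r.IsHomogeneous k := by
    intro r hr0 hr
    refine ⟨(hgr r).natDegree, isHomogeneous_of_components fun d' hd' => ?_⟩
    rw [← coeff_hgr]
    rcases lt_or_gt_of_ne hd' with h | h
    · exact Polynomial.coeff_eq_zero_of_lt_natTrailingDegree (by omega)
    · exact Polynomial.coeff_eq_zero_of_natDegree_lt h
  rcases key with h | h
  · exact Or.inl (main p hp0 h)
  · exact Or.inr (main q hq0 h)

end Domain


section Units
variable {R : Type*} [CommRing R] [IsDomain R] {σ : Type*}

lemma homogeneousComponent_eq_zero_of_isUnit {x : MvPolynomial σ R} (h : IsUnit x)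
    {k : ℕ} (hk : k ≠ 0) : homogeneousComponent k x = 0 := by
  have h1 : IsUnit (hgr x) := h.map hgr
  have h2 : (hgr x).natDegree = 0 := Polynomial.natDegree_eq_zero_of_isUnit h1
  rw [← coeff_hgr]
  exact Polynomial.coeff_eq_zero_of_natDegree_lt (by omega)

end Units

section DegreeOf
variable {R : Type*} [CommRing R] [IsDomain R]

lemma degreeOf_mul_eq' {n : ℕ} (p q : MvPolynomial (Fin n) R)
    (hp : p ≠ 0) (hq : q ≠ 0) (i : Fin n) :
    degreeOf i (p * q) = degreeOf i p + degreeOf i q := by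
  obtain ⟨m, rfl⟩ : ∃ m, n = m + 1 :=
    Nat.exists_eq_succ_of_ne_zero (by rintro rfl; exact i.elim0)
  set e := Equiv.swap i (0 : Fin (m + 1)) with he
  have h1 : ∀ r : MvPolynomial (Fin (m + 1)) R, degreeOf i r = degreeOf 0 (rename e r) := by
    intro r
    have := degreeOf_rename_of_injective (p := r) e.injective i
    rw [← this, he, Equiv.swap_apply_left]
  have hz : ∀ r : MvPolynomial (Fin (m + 1)) R, r ≠ 0 →
      (finSuccEquiv R m) (rename e r) ≠ 0 := by
    intro r hr h0
    apply hr
    have : rename e r = 0 := by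
      apply (finSuccEquiv R m).injective
      rw [h0, map_zero]
    have := (rename_injective e e.injective) (by rw [this, map_zero] : rename e r = rename e 0)
    exact this
  rw [h1, h1, h1, map_mul, ← natDegree_finSuccEquiv, ← natDegree_finSuccEquiv,
    ← natDegree_finSuccEquiv, map_mul]
  exact Polynomial.natDegree_mul (hz p hp) (hz q hq)

end DegreeOf

section Descent
variable {K L : Type*} [Field K] [Field L] [Algebra K L] {σ : Type*}

noncomputable def lmap (l : L →ₗ[K] K) (Q : MvPolynomial σ L) : MvPolynomial σ K :=
  ∑ m ∈ Q.support, monomial m (l (coeff m Q))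

lemma coeff_lmap (l : L →ₗ[K] K) (Q : MvPolynomial σ L) (m : σ →₀ ℕ) :
    coeff m (lmap l Q) = l (coeff m Q) := by
  classical
  rw [lmap, MvPolynomial.coeff_sum]
  simp_rw [MvPolynomial.coeff_monomial]
  rw [Finset.sum_ite_eq' Q.support m (fun m' => l (coeff m' Q))]
  split_ifs with h
  · rfl
  · rw [notMem_support_iff.1 h, map_zero]

lemma exists_retraction : ∃ l : L →ₗ[K] K, ∀ k : K, l (algebraMap K L k) = k := by
  obtain ⟨l, hl⟩ := (Algebra.linearMap K L).exists_leftInverse_of_injective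
    (LinearMap.ker_eq_bot.2 (fun a b hab => (algebraMap K L).injective hab))
  exact ⟨l, fun k => by
    have := LinearMap.congr_fun hl k
    simpa [Algebra.linearMap_apply] using this⟩

lemma dvd_of_map_dvd {g h : MvPolynomial σ K}
    (hd : MvPolynomial.map (algebraMap K L) g ∣ MvPolynomial.map (algebraMap K L) h) :
    g ∣ h := by
  classical
  obtain ⟨Q, hQ⟩ := hd
  obtain ⟨l, hl⟩ := exists_retraction (K := K) (L := L)
  refine ⟨lmap l Q, MvPolynomial.ext _ _ fun m => ?_⟩
  have h1 : l (coeff m (MvPolynomial.map (algebraMap K L) h)) = coeff m h := by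
    rw [MvPolynomial.coeff_map, hl]
  rw [← h1, hQ, MvPolynomial.coeff_mul, MvPolynomial.coeff_mul, map_sum]
  refine Finset.sum_congr rfl fun x _ => ?_
  rw [MvPolynomial.coeff_map, ← Algebra.smul_def, map_smul, coeff_lmap, smul_eq_mul]

lemma exists_preimage {Q : MvPolynomial σ L}
    (h : ∀ m, coeff m Q ∈ Set.range (algebraMap K L)) :
    ∃ q : MvPolynomial σ K, MvPolynomial.map (algebraMap K L) q = Q := by
  obtain ⟨l, hl⟩ := exists_retraction (K := K) (L := L)
  refine ⟨lmap l Q, MvPolynomial.ext _ _ fun m => ?_⟩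
  rw [MvPolynomial.coeff_map, coeff_lmap]
  obtain ⟨k, hk⟩ := h m
  rw [← hk, hl]

end Descent


section Main
variable {K L : Type*} [Field K] [Field L] [Algebra K L] {n : ℕ}

lemma irreducible_map_of_squarefreeSupported {g : MvPolynomial (Fin n) K}
    (hgs : SquarefreeSupported g) (hgi : Irreducible g) :
    Irreducible (MvPolynomial.map (algebraMap K L) g) := by
  classical
  have hφ : Function.Injective (algebraMap K L) := (algebraMap K L).injective
  have hmapinj : Function.Injective (MvPolynomial.map (algebraMap K L) :
      MvPolynomial (Fin n) K → MvPolynomial (Fin n) L) := MvPolynomial.map_injective _ hφ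
  have hg0 : g ≠ 0 := hgi.ne_zero
  have hG0 : MvPolynomial.map (algebraMap K L) g ≠ 0 := fun h =>
    hg0 (hmapinj (by rw [h, map_zero]))
  constructor
  · -- map g is not a unit
    intro hu
    apply hgi.not_isUnit
    have hgC : g = MvPolynomial.C (coeff 0 g) := by
      apply MvPolynomial.ext
      intro m
      by_cases hm : m = 0
      · subst hm; simp [MvPolynomial.coeff_C]
      · have hk : m.degree ≠ 0 := fun hd => hm ((Finsupp.degree_eq_zero_iff m).1 hd)
        have hz : homogeneousComponent m.degree (MvPolynomial.map (algebraMap K L) g) = 0 :=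
          homogeneousComponent_eq_zero_of_isUnit hu hk
        have h2 := coeff_homogeneousComponent (σ := Fin n) m.degree
          (MvPolynomial.map (algebraMap K L) g) m
        rw [hz, if_pos rfl] at h2
        rw [MvPolynomial.coeff_map] at h2
        have : coeff m g = 0 := hφ (by rw [← h2, map_zero] at *; exact h2.symm ▸ rfl)
        rw [this, MvPolynomial.coeff_C, if_neg (fun hh => hm hh.symm)]
    have hc : coeff 0 g ≠ 0 := fun h => hg0 (by rw [hgC, h, map_zero])
    rw [hgC]
    exact isUnit_iff_exists_inv.2 ⟨MvPolynomial.C (coeff 0 g)⁻¹,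
      by rw [← map_mul, mul_inv_cancel₀ hc, MvPolynomial.C_1]⟩
  · intro P Q hPQ
    have hPQ' : P * Q = MvPolynomial.map (algebraMap K L) g := hPQ.symm
    have hP0 : P ≠ 0 := by rintro rfl; rw [zero_mul] at hPQ'; exact hG0 hPQ'.symm
    have hQ0 : Q ≠ 0 := by rintro rfl; rw [mul_zero] at hPQ'; exact hG0 hPQ'.symm
    have hdeg : ∀ i : Fin n, degreeOf i P + degreeOf i Q ≤ 1 := by
      intro i
      rw [← degreeOf_mul_eq' P Q hP0 hQ0 i, hPQ']
      rw [degreeOf_le_iff]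
      exact fun m hm => hgs m (MvPolynomial.support_map_subset _ _ hm) i
    have key : ∀ m ∈ P.support, ∀ m' ∈ Q.support,
        coeff (m + m') (MvPolynomial.map (algebraMap K L) g) = coeff m P * coeff m' Q := by
      intro m hm m' hm'
      rw [← hPQ', MvPolynomial.coeff_mul]
      refine Finset.sum_eq_single_of_mem (m, m') (Finset.HasAntidiagonal.mem_antidiagonal.2 rfl) ?_
      rintro ⟨a, b⟩ hab hne
      rw [Finset.HasAntidiagonal.mem_antidiagonal] at hab
      by_cases ha : coeff a P = 0
      · rw [ha, zero_mul]
      by_cases hb : coeff b Q = 0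
      · rw [hb, mul_zero]
      exfalso
      apply hne
      have haP : a ∈ P.support := mem_support_iff.2 ha
      have hbQ : b ∈ Q.support := mem_support_iff.2 hb
      have hext : ∀ i, a i = m i ∧ b i = m' i := by
        intro i
        have h1 := hdeg i
        have hcongr : a i + b i = m i + m' i := by
          have := DFunLike.congr_fun hab i
          simpa using this
        have b1 : a i ≤ degreeOf i P := by
          rw [degreeOf_eq_sup]; exact Finset.le_sup (f := fun m => m i) haP
        have b2 : b i ≤ degreeOf i Q := by
          rw [degreeOf_eq_sup]; exact Finset.le_sup (f := fun m => m i) hbQ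
        have b3 : m i ≤ degreeOf i P := by
          rw [degreeOf_eq_sup]; exact Finset.le_sup (f := fun m => m i) hm
        have b4 : m' i ≤ degreeOf i Q := by
          rw [degreeOf_eq_sup]; exact Finset.le_sup (f := fun m => m i) hm'
        omega
      have : a = m ∧ b = m' :=
        ⟨Finsupp.ext fun i => (hext i).1, Finsupp.ext fun i => (hext i).2⟩
      rw [Prod.ext_iff]
      exact ⟨this.1, this.2⟩
    obtain ⟨m₀, hm₀⟩ := Finset.nonempty_iff_ne_empty.2
      (fun h => hP0 (MvPolynomial.support_eq_empty.1 h))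
    obtain ⟨m₀', hm₀'⟩ := Finset.nonempty_iff_ne_empty.2
      (fun h => hQ0 (MvPolynomial.support_eq_empty.1 h))
    set c := coeff m₀' Q with hcdef
    have hcne : c ≠ 0 := mem_support_iff.1 hm₀'
    have hbne : coeff m₀ P ≠ 0 := mem_support_iff.1 hm₀
    have hPr : ∀ m, MvPolynomial.coeff m (MvPolynomial.C c * P) ∈ Set.range (algebraMap K L) := by
      intro m
      rw [MvPolynomial.coeff_C_mul]
      by_cases h : coeff m P = 0
      · rw [h, mul_zero]; exact ⟨0, map_zero _⟩
      · refine ⟨coeff (m + m₀') g, ?_⟩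
        have := key m (mem_support_iff.2 h) m₀' hm₀'
        rw [MvPolynomial.coeff_map] at this
        rw [this, mul_comm]
    have hQr : ∀ m', MvPolynomial.coeff m' (MvPolynomial.C c⁻¹ * Q) ∈ Set.range (algebraMap K L) := by
      intro m'
      rw [MvPolynomial.coeff_C_mul]
      by_cases h : coeff m' Q = 0
      · rw [h, mul_zero]; exact ⟨0, map_zero _⟩
      · refine ⟨coeff (m₀ + m') g / coeff (m₀ + m₀') g, ?_⟩
        rw [map_div₀]
        have k1 := key m₀ hm₀ m' (mem_support_iff.2 h)
        have k2 := key m₀ hm₀ m₀' hm₀'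
        rw [MvPolynomial.coeff_map] at k1 k2
        rw [k1, k2, ← hcdef]
        field_simp
    obtain ⟨p, hp⟩ := exists_preimage hPr
    obtain ⟨q, hq⟩ := exists_preimage hQr
    have hgpq : g = p * q := by
      apply hmapinj
      rw [map_mul, hp, hq, mul_mul_mul_comm, ← map_mul, mul_inv_cancel₀ hcne,
        MvPolynomial.C_1, one_mul, hPQ']
    rcases hgi.isUnit_or_isUnit hgpq with h | h
    · left
      have hu : IsUnit (MvPolynomial.C c * P) := hp ▸ h.map (MvPolynomial.map (algebraMap K L))
      exact (IsUnit.mul_iff.1 hu).2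
    · right
      have hu : IsUnit (MvPolynomial.C c⁻¹ * Q) := hq ▸ h.map (MvPolynomial.map (algebraMap K L))
      exact (IsUnit.mul_iff.1 hu).2

end Main

end GeomIrred

/-- Let `g, h` be square-free supported homogeneous polynomials with
`deg h = 1 + deg g`, and `ℓ = a₁x₁ + ⋯ + aₙxₙ + 1`. If `g` is irreducible and `g ∤ h`,
then `f = g·ℓ + h` is geometrically irreducible. -/
theorem geometrically_irreducible_modification {K : Type*} [Field K] {n : ℕ}
    (g h : MvPolynomial (Fin n) K) (dg : ℕ)
    (hgh : g.IsHomogeneous dg) (hhh : h.IsHomogeneous (dg + 1))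
    (hgs : SquarefreeSupported g) (hhs : SquarefreeSupported h)
    (a : Fin n → K) (hgi : Irreducible g) (hndvd : ¬ g ∣ h) :
    ∀ (L : Type*) [Field L] [Algebra K L],
      Irreducible (MvPolynomial.map (algebraMap K L)
        (g * (∑ i, MvPolynomial.C (a i) * MvPolynomial.X i + 1) + h)) := by
  classical
  intro L _ _
  open GeomIrred in
  set lin : MvPolynomial (Fin n) K := ∑ i, MvPolynomial.C (a i) * MvPolynomial.X i with hlin
  have hlinh : lin.IsHomogeneous 1 := by
    rw [hlin]
    exact MvPolynomial.IsHomogeneous.sum Finset.univ _ 1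
      (fun i _ => MvPolynomial.isHomogeneous_C_mul_X (a i) i)
  have hmapinj : Function.Injective (MvPolynomial.map (algebraMap K L) :
      MvPolynomial (Fin n) K → MvPolynomial (Fin n) L) :=
    MvPolynomial.map_injective _ (algebraMap K L).injective
  set A : MvPolynomial (Fin n) L := MvPolynomial.map (algebraMap K L) (g * lin + h) with hAdef
  set B : MvPolynomial (Fin n) L := MvPolynomial.map (algebraMap K L) g with hBdef
  have hA : A.IsHomogeneous (dg + 1) := ((hgh.mul hlinh).add hhh).map _
  have hB : B.IsHomogeneous dg := hgh.map _
  have hg0 : g ≠ 0 := hgi.ne_zero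
  have hB0 : B ≠ 0 := fun h0 => hg0 (hmapinj (by rw [map_zero]; exact h0))
  have hA0 : A ≠ 0 := by
    intro h0
    apply hndvd
    have hz : g * lin + h = 0 := hmapinj (by rw [hAdef] at h0; rw [h0, map_zero])
    exact ⟨-lin, by linear_combination hz⟩
  have hFeq : MvPolynomial.map (algebraMap K L)
      (g * (∑ i, MvPolynomial.C (a i) * MvPolynomial.X i + 1) + h) = A + B := by
    rw [hAdef, hBdef, ← map_add]
    congr 1
    rw [hlin]
    ring
  rw [hFeq]
  have hirrB : Irreducible B := GeomIrred.irreducible_map_of_squarefreeSupported hgs hgi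
  have main : ∀ w : MvPolynomial (Fin n) L, w ∣ A + B → (∃ k, w.IsHomogeneous k) → IsUnit w := by
    rintro w hdvd ⟨k, hk⟩
    have h1 : w ∣ A := by
      have := GeomIrred.dvd_homogeneousComponent_of_isHomogeneous_dvd hk hdvd (dg + 1)
      rwa [GeomIrred.homogeneousComponent_add_top hA hB] at this
    have h2 : w ∣ B := by
      have := GeomIrred.dvd_homogeneousComponent_of_isHomogeneous_dvd hk hdvd dg
      rwa [GeomIrred.homogeneousComponent_add_bot hA hB] at this
    by_contra hw
    obtain ⟨t, ht⟩ := h2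
    rcases hirrB.isUnit_or_isUnit ht with hu | hu
    · exact hw hu
    have hBw : B ∣ w := by
      obtain ⟨v, hv⟩ := isUnit_iff_exists_inv.1 hu
      exact ⟨v, by rw [ht, mul_assoc, hv, mul_one]⟩
    have hAh : MvPolynomial.map (algebraMap K L) h
        = A - B * MvPolynomial.map (algebraMap K L) lin := by
      rw [hAdef, hBdef, map_add, map_mul]
      ring
    have hBh : B ∣ MvPolynomial.map (algebraMap K L) h := by
      rw [hAh]
      exact dvd_sub (hBw.trans h1) ⟨MvPolynomial.map (algebraMap K L) lin, rfl⟩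
    exact hndvd (GeomIrred.dvd_of_map_dvd hBh)
  constructor
  · intro hu
    apply hA0
    rw [← GeomIrred.homogeneousComponent_add_top hA hB]
    exact GeomIrred.homogeneousComponent_eq_zero_of_isUnit hu (Nat.succ_ne_zero dg)
  · intro P Q hPQ
    have hPQ' : P * Q = A + B := hPQ.symm
    rcases GeomIrred.exists_isHomogeneous_factor hA hB hA0 hB0 hPQ' with hhom | hhom
    · exact Or.inl (main P ⟨Q, hPQ⟩ hhom)
    · exact Or.inr (main Q ⟨P, by rw [hPQ]; ring⟩ hhom)
end

section
/- Let R be a commutative ring, S = R[x₁,…,xₙ], and let f ∈ S be a square-free supported polynomial. Let u be a monomial in the support of f with coefficient c ∈ R. Then for every integer m ≥ 1, the coefficient of the monomial u^m in f^m equals c^m. In particular, if R is a field, then u^m belongs to the support of f^m. -/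
/-- Auxiliary: if `f` is square-free supported then every exponent in `f ^ m` is at most `m`. -/
lemma aux_exp_le {R : Type*} [CommRing R] {n : ℕ}
    (f : MvPolynomial (Fin n) R) (hsq : SquarefreeSupported f) :
    ∀ m : ℕ, ∀ b : Fin n →₀ ℕ, MvPolynomial.coeff b (f ^ m) ≠ 0 → ∀ i : Fin n, b i ≤ m := by
  intro m
  induction m with
  | zero =>
    intro b hb i
    rw [pow_zero, MvPolynomial.coeff_one] at hb
    by_cases h : (0 : Fin n →₀ ℕ) = b
    · simp [← h]
    · simp [h] at hb
  | succ k ih =>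
    intro b hb i
    rw [pow_succ, MvPolynomial.coeff_mul] at hb
    obtain ⟨p, hp, hne⟩ := Finset.exists_ne_zero_of_sum_ne_zero hb
    rw [Finset.HasAntidiagonal.mem_antidiagonal] at hp
    have h1 : MvPolynomial.coeff p.1 (f ^ k) ≠ 0 := fun h => hne (by simp [h])
    have h2 : MvPolynomial.coeff p.2 f ≠ 0 := fun h => hne (by simp [h])
    have hb1 : p.1 i ≤ k := ih p.1 h1 i
    have hb2 : p.2 i ≤ 1 := hsq p.2 (MvPolynomial.mem_support_iff.mpr h2) i
    have : b i = p.1 i + p.2 i := by rw [← hp]; simp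
    omega

/-- If `f` is square-free supported over a commutative ring `R` and `u` is
a monomial in the support of `f` with coefficient `c`, then for every `m ≥ 1` the
coefficient of `u^m` (i.e. of the exponent vector `m • u`) in `f^m` equals `c^m`. -/
theorem coeff_pow_of_squarefreeSupported {R : Type*} [CommRing R] {n : ℕ}
    (f : MvPolynomial (Fin n) R) (hsq : SquarefreeSupported f)
    (u : Fin n →₀ ℕ) (hu : u ∈ f.support) (m : ℕ) (hm : 1 ≤ m) :
    MvPolynomial.coeff (m • u) (f ^ m) = (MvPolynomial.coeff u f) ^ m := by
  clear hm
  induction m with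
  | zero => simp
  | succ k ih =>
    rw [pow_succ, MvPolynomial.coeff_mul]
    rw [Finset.sum_eq_single (k • u, u)]
    · rw [ih, pow_succ]
    · intro p hp hne
      rw [Finset.HasAntidiagonal.mem_antidiagonal] at hp
      by_contra hc
      have h1 : MvPolynomial.coeff p.1 (f ^ k) ≠ 0 := fun h => hc (by simp [h])
      have h2 : MvPolynomial.coeff p.2 f ≠ 0 := fun h => hc (by simp [h])
      have hle1 : ∀ i, p.1 i ≤ k := aux_exp_le f hsq k p.1 h1
      have hle2 : ∀ i, p.2 i ≤ 1 := hsq p.2 (MvPolynomial.mem_support_iff.mpr h2)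
      have hui : ∀ i : Fin n, u i ≤ 1 := hsq u hu
      have hsum : ∀ i : Fin n, p.1 i + p.2 i = (k + 1) * u i := by
        intro i
        have := DFunLike.congr_fun hp i
        simpa [Finsupp.smul_apply] using this
      have hcase : ∀ i : Fin n, p.1 i = k * u i ∧ p.2 i = u i := by
        intro i
        have hs := hsum i
        have := hle1 i; have := hle2 i
        rcases Nat.le_one_iff_eq_zero_or_eq_one.mp (hui i) with h | h <;>
          rw [h] at hs ⊢ <;> omega
      have hp2 : p.2 = u := by ext i; exact (hcase i).2
      have hp1 : p.1 = k • u := by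
        ext i
        simpa [Finsupp.smul_apply] using (hcase i).1
      exact hne (Prod.ext hp1 hp2)
    · intro h
      exfalso
      apply h
      rw [Finset.HasAntidiagonal.mem_antidiagonal]
      ext i
      simp [add_mul, add_smul]
end

section
/- Let K be a field of characteristic p > 0, S = K[x₁,…,xₙ], and let f ∈ S be a nonzero square-free supported polynomial. Suppose that some monomial in the support of f is not divisible by the variable xₙ. Then for every e ≥ 1, setting q = p^e, the polynomial xₙ · f^{q−1} does not belong to the ideal (x₁^q, …, xₙ^q) of S. -/
open MvPolynomial Pointwise


private lemma two_pow_sum (m : ℕ) : ∑ i : Fin m, 2^(i:ℕ) = 2^m - 1 := by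
  induction m with
  | zero => simp
  | succ m ih =>
    rw [Fin.sum_univ_castSucc]
    simp only [Fin.coe_castSucc, Fin.val_last, ih, pow_succ]
    have : 1 ≤ 2^m := Nat.one_le_two_pow
    omega

private lemma bin_inj : ∀ (m : ℕ) (a b : Fin m → ℕ), (∀ i, a i ≤ 1) → (∀ i, b i ≤ 1) →
    (∑ i, a i * 2^(i:ℕ)) = (∑ i, b i * 2^(i:ℕ)) → ∀ i, a i = b i := by
  intro m
  induction m with
  | zero => intro a b _ _ _ i; exact i.elim0
  | succ m ih =>
    intro a b ha hb h i
    rw [Fin.sum_univ_succ, Fin.sum_univ_succ] at h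
    simp only [Fin.val_zero, pow_zero, mul_one, Fin.val_succ] at h
    have e : ∀ (c : Fin (m+1) → ℕ),
        ∑ j : Fin m, c j.succ * 2^((j:ℕ)+1) = 2 * ∑ j : Fin m, c j.succ * 2^(j:ℕ) := by
      intro c; rw [Finset.mul_sum]; apply Finset.sum_congr rfl; intros; ring
    rw [e a, e b] at h
    have h0 := ha 0
    have h0' := hb 0
    have hab : a 0 = b 0 ∧ (∑ j : Fin m, a j.succ * 2^(j:ℕ)) = ∑ j : Fin m, b j.succ * 2^(j:ℕ) := by
      omega
    cases i using Fin.cases with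
    | zero => exact hab.1
    | succ j =>
      exact ih (fun j => a j.succ) (fun j => b j.succ) (fun _ => ha _) (fun _ => hb _) hab.2 j


private lemma pow_max {N : ℕ} {K : Type*} [CommSemiring K] (f : MvPolynomial (Fin N) K)
    (L : (Fin N →₀ ℕ) → ℤ) (hL0 : L 0 = 0) (hLadd : ∀ a b, L (a+b) = L a + L b)
    (m : Fin N →₀ ℕ) (hmax : ∀ d ∈ f.support, L d ≤ L m)
    (hstrict : ∀ d ∈ f.support, L d = L m → d = m) (k : ℕ) :
    (∀ d ∈ (f^k).support, L d ≤ k * L m ∧ (L d = k * L m → d = k • m)) ∧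
      MvPolynomial.coeff (k • m) (f^k) = (MvPolynomial.coeff m f)^k := by
  classical
  induction k with
  | zero =>
    constructor
    · intro d hd
      have hne := MvPolynomial.mem_support_iff.mp hd
      have hd0 : d = 0 := by
        by_contra h
        apply hne
        rw [pow_zero, MvPolynomial.coeff_one, if_neg (fun he => h he.symm)]
      subst hd0
      simp [hL0]
    · simp [MvPolynomial.coeff_zero_one]
  | succ k ih =>
    obtain ⟨ihs, ihc⟩ := ih
    have hsupp : ∀ d ∈ (f^(k+1)).support, L d ≤ (k+1) * L m ∧ (L d = (k+1)*L m → d = (k+1) • m) := by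
      intro d hd
      rw [pow_succ] at hd
      have hd' : d ∈ (f^k).support + f.support := MvPolynomial.support_mul _ _ hd
      obtain ⟨d1, hd1, d2, hd2, rfl⟩ := Finset.mem_add.mp hd'
      have h1 := (ihs d1 hd1).1
      have h2 := hmax d2 hd2
      constructor
      · rw [hLadd]; push_cast; linarith
      · intro he
        rw [hLadd] at he
        have e1 : L d1 = k * L m := by push_cast at he ⊢; linarith
        have e2 : L d2 = L m := by linarith [he, e1]
        rw [(ihs d1 hd1).2 e1, hstrict d2 hd2 e2, succ_nsmul]
    refine ⟨hsupp, ?_⟩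
    rw [pow_succ, MvPolynomial.coeff_mul]
    rw [Finset.sum_eq_single ((k • m : Fin N →₀ ℕ), m)]
    · rw [ihc, pow_succ]
    · intro b hb hne
      have hb' : b.1 + b.2 = (k+1) • m := Finset.HasAntidiagonal.mem_antidiagonal.mp hb
      by_cases h1 : MvPolynomial.coeff b.1 (f^k) = 0
      · rw [h1, zero_mul]
      by_cases h2 : MvPolynomial.coeff b.2 f = 0
      · rw [h2, mul_zero]
      exfalso
      have hb1 : b.1 ∈ (f^k).support := MvPolynomial.mem_support_iff.mpr h1
      have hb2 : b.2 ∈ f.support := MvPolynomial.mem_support_iff.mpr h2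
      have hsum : L b.1 + L b.2 = (k+1) * L m := by
        rw [← hLadd, hb']
        have hLsm : ∀ (j:ℕ), L (j • m) = j * L m := by
          intro j; induction j with
          | zero => simpa using hL0
          | succ j ihj => rw [succ_nsmul, hLadd, ihj]; push_cast; ring
        exact hLsm (k+1)
      have hle1 := (ihs b.1 hb1).1
      have hle2 := hmax b.2 hb2
      have e1 : L b.1 = k * L m := by push_cast at hsum hle1 ⊢; linarith
      have e2 : L b.2 = L m := by linarith
      apply hne
      have := (ihs b.1 hb1).2 e1
      have := hstrict b.2 hb2 e2
      exact Prod.ext ‹b.1 = k • m› ‹b.2 = m›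
    · intro h
      exact absurd (Finset.HasAntidiagonal.mem_antidiagonal.mpr (succ_nsmul m k).symm) h


private lemma coeff_eq_zero_of_mem_span {N q : ℕ} {K : Type*} [CommSemiring K]
    {g : MvPolynomial (Fin N) K}
    (hg : g ∈ Ideal.span (Set.range fun i : Fin N => (X i : MvPolynomial (Fin N) K) ^ q))
    (d : Fin N →₀ ℕ) (hd : ∀ i, d i < q) : MvPolynomial.coeff d g = 0 := by
  classical
  revert d
  refine Submodule.span_induction
    (p := fun x _ => ∀ d : Fin N →₀ ℕ, (∀ i, d i < q) → MvPolynomial.coeff d x = 0)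
    ?_ ?_ ?_ ?_ hg
  · rintro x ⟨i, rfl⟩ d hd
    rw [MvPolynomial.coeff_X_pow, if_neg]
    intro h
    have := DFunLike.congr_fun h i
    rw [Finsupp.single_eq_same] at this
    exact absurd (hd i) (by omega)
  · intro d _; simp
  · intro x y _ _ ihx ihy d hd
    rw [MvPolynomial.coeff_add, ihx d hd, ihy d hd, add_zero]
  · intro a x _ ihx d hd
    rw [smul_eq_mul, MvPolynomial.coeff_mul]
    apply Finset.sum_eq_zero
    intro b hb
    have hb' := Finset.HasAntidiagonal.mem_antidiagonal.mp hb
    rw [ihx b.2 ?_, mul_zero]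
    intro i
    have h1 : b.1 i + b.2 i = d i := by
      have := DFunLike.congr_fun hb' i
      simpa using this
    have := hd i
    omega

/-- In characteristic `p > 0`, if `f ≠ 0` is square-free supported and some
monomial in its support is not divisible by the last variable `xₙ`, then for every `e ≥ 1`
and `q = p^e`, the polynomial `xₙ · f^(q−1)` is not in the ideal `(x₁^q, …, xₙ^q)`. -/
theorem fedder_glassbrenner_of_squarefreeSupported {K : Type*} [Field K] {p : ℕ}
    (hp : p.Prime) [CharP K p] {n : ℕ} (f : MvPolynomial (Fin (n + 1)) K) (hf : f ≠ 0)
    (hsq : SquarefreeSupported f) (hmon : ∃ m ∈ f.support, m (Fin.last n) = 0)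
    (e : ℕ) (he : 1 ≤ e) :
    MvPolynomial.X (Fin.last n) * f ^ (p ^ e - 1) ∉
      Ideal.span (Set.range fun i : Fin (n + 1) =>
        (MvPolynomial.X i : MvPolynomial (Fin (n + 1)) K) ^ (p ^ e)) := by
  classical
  intro hmem
  set q := p ^ e with hq
  have hq2 : 2 ≤ q := le_trans hp.two_le (Nat.le_self_pow (by omega) p)
  obtain ⟨m0, hm0, hm0last⟩ := hmon
  set S : (Fin (n+1) →₀ ℕ) → ℤ := fun a => ∑ i : Fin n, (a i.castSucc : ℤ) * 2^(i:ℕ)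
    with hSdef
  set L : (Fin (n+1) →₀ ℕ) → ℤ := fun a => S a - 2^n * (a (Fin.last n)) with hLdef
  have hL0 : L 0 = 0 := by simp [hLdef, hSdef]
  have hLadd : ∀ a b, L (a+b) = L a + L b := by
    intro a b
    simp only [hLdef, hSdef, Finsupp.add_apply, Nat.cast_add, add_mul]
    rw [Finset.sum_add_distrib]
    ring
  have h2n : (1:ℤ) ≤ 2^n := one_le_pow₀ (by norm_num)
  have hSnn : ∀ a : Fin (n+1) →₀ ℕ, 0 ≤ S a := by
    intro a; apply Finset.sum_nonneg; intro i _; positivity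
  have hSbound : ∀ a : Fin (n+1) →₀ ℕ, (∀ i, a i ≤ 1) → S a ≤ 2^n - 1 := by
    intro a ha
    have h1 : S a ≤ ∑ i : Fin n, (1:ℤ) * 2^(i:ℕ) := by
      apply Finset.sum_le_sum
      intro i _
      have : (a i.castSucc : ℤ) ≤ 1 := by exact_mod_cast ha i.castSucc
      have : (0:ℤ) ≤ 2^(i:ℕ) := by positivity
      nlinarith [ha i.castSucc]
    have h2 : ∑ i : Fin n, (1:ℤ) * 2^(i:ℕ) = 2^n - 1 := by
      have := two_pow_sum n
      have hc : ((∑ i : Fin n, 2^(i:ℕ) : ℕ) : ℤ) = ((2^n - 1 : ℕ) : ℤ) :=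
        congrArg (fun x : ℕ => (x : ℤ)) this
      push_cast [Nat.cast_sub (Nat.one_le_two_pow (n := n))] at hc
      simpa using hc
    linarith
  obtain ⟨m, hm, hmmax⟩ := f.support.exists_max_image L
    (by rwa [MvPolynomial.support_nonempty])
  have hmsq : ∀ i, m i ≤ 1 := hsq m hm
  have hmlast : m (Fin.last n) = 0 := by
    by_contra hne
    have h1 : 1 ≤ m (Fin.last n) := Nat.one_le_iff_ne_zero.mpr hne
    have hub := hSbound m hmsq
    have hlb := hmmax m0 hm0
    simp only [hLdef, hm0last, Nat.cast_zero, mul_zero, sub_zero] at hlb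
    have c2 : (2:ℤ)^n * 1 ≤ 2^n * (m (Fin.last n)) := by
      apply mul_le_mul_of_nonneg_left _ (by positivity)
      exact_mod_cast h1
    have c3 := hSnn m0
    linarith
  have hstrict : ∀ d ∈ f.support, L d = L m → d = m := by
    intro d hd heq
    have hdsq := hsq d hd
    simp only [hLdef, hmlast, Nat.cast_zero, mul_zero, sub_zero] at heq
    have hbd := hSbound d hdsq
    have hdl := hdsq (Fin.last n)
    have hSm0 := hSnn m
    have hdlast : d (Fin.last n) = 0 := by
      by_contra hdne
      have hd1 : 1 ≤ d (Fin.last n) := Nat.one_le_iff_ne_zero.mpr hdne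
      have c2 : (2:ℤ)^n * 1 ≤ 2^n * (d (Fin.last n)) := by
        apply mul_le_mul_of_nonneg_left _ (by positivity)
        exact_mod_cast hd1
      linarith
    rw [hdlast] at heq
    simp only [Nat.cast_zero, mul_zero, sub_zero] at heq
    have hSeq : (∑ i : Fin n, d i.castSucc * 2^(i:ℕ)) = ∑ i : Fin n, m i.castSucc * 2^(i:ℕ) := by
      have : S d = S m := heq
      simp only [hSdef] at this
      exact_mod_cast this
    have hbits := bin_inj n (fun i => d i.castSucc) (fun i => m i.castSucc)
      (fun i => hdsq _) (fun i => hmsq _) hSeq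
    ext i
    cases i using Fin.lastCases with
    | last => rw [hdlast, hmlast]
    | cast j => exact hbits j
  obtain ⟨_, hcoeff⟩ := pow_max f L hL0 hLadd m hmmax hstrict (q-1)
  have hcne : MvPolynomial.coeff m f ≠ 0 := MvPolynomial.mem_support_iff.mp hm
  set d : Fin (n+1) →₀ ℕ := Finsupp.single (Fin.last n) 1 + (q-1) • m with hd
  have hdq : ∀ i, d i < q := by
    intro i
    rw [hd, Finsupp.add_apply, Finsupp.smul_apply, smul_eq_mul]
    by_cases h : i = Fin.last n
    · subst h; rw [Finsupp.single_eq_same, hmlast]; omega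
    · rw [Finsupp.single_eq_of_ne' (Ne.symm h)]
      have h1 : (q-1) * m i ≤ (q-1) * 1 := Nat.mul_le_mul_left _ (hmsq i)
      omega
  have hco : MvPolynomial.coeff d (MvPolynomial.X (Fin.last n) * f^(q-1))
      = MvPolynomial.coeff m f ^ (q-1) := by
    rw [hd, MvPolynomial.coeff_X_mul, hcoeff]
  have hz := coeff_eq_zero_of_mem_span hmem d hdq
  rw [hco] at hz
  exact pow_ne_zero _ hcne hz
end
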